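/- arXiv:1506.03488 — 3 statements merged into one kernel-verified Lean document; each statement's English description precedes it below -/
import Mathlib

section
/- Relativized semiselective Galvin lemma (for the Ellentuck space): Let H ⊆ ℕ^[∞] be a semiselective coideal, let F be a family of finite subsets of ℕ, let A ∈ H and let a be a finite subset of A. Then there exists B ∈ H ∩ [a,A] such that either (1) no set b ∈ F satisfies: a ⊆ b, every element of b ∖ a is greater than every element of a, and b ∖ a ⊆ B; or (2) every C ∈ [a,B] has an initial segment in F, i.e. there is n ∈ ℕ with r_n(C) ∈ F. -/
open Set

/-- `ellR n A` : the set of the `n` least elements of `A ⊆ ℕ` (the approximation `rₙ(A)`). -/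
noncomputable def ellR (n : ℕ) (A : Set ℕ) : Finset ℕ :=
  (Finset.range n).image (Nat.nth (· ∈ A))

/-- `a ⊏ B` : the finite set `a` is an initial segment of `B`. -/
def IsInitSeg (a : Finset ℕ) (B : Set ℕ) : Prop :=
  ↑a ⊆ B ∧ ∀ x ∈ B, x ∉ a → ∀ y ∈ a, y < x

/-- The Ellentuck neighborhood `[a, A] = {B ∈ ℕ^[∞] : a ⊏ B ∧ B ⊆ A}`. -/
def ENbhd (a : Finset ℕ) (A : Set ℕ) : Set (Set ℕ) :=
  {B | B.Infinite ∧ IsInitSeg a B ∧ B ⊆ A}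

/-- `[n, A] := [rₙ(A), A]`. -/
noncomputable def ENbhdN (n : ℕ) (A : Set ℕ) : Set (Set ℕ) :=
  ENbhd (ellR n A) A

/-- `depth_A(a)` : the least `n` with `a ⊆ rₙ(A)`. -/
noncomputable def depth (A : Set ℕ) (a : Finset ℕ) : ℕ :=
  sInf {n | a ⊆ ellR n A}

/-- The one-step extensions of `a` inside `B`: the sets `a ∪ {x}` with `x ∈ B` greater
than every element of `a` (i.e. `r_{|a|+1}[a,B]`). -/
def oneStepExt (a : Finset ℕ) (B : Set ℕ) : Set (Finset ℕ) :=
  {b | ∃ x ∈ B, (∀ y ∈ a, y < x) ∧ b = insert x a}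

/-- `H ⊆ ℕ^[∞]` is a coideal: upward closed, satisfies A3 mod H and A4 mod H. -/
def IsCoideal (H : Set (Set ℕ)) : Prop :=
  (∀ A ∈ H, A.Infinite) ∧
  (∀ A ∈ H, ∀ B : Set ℕ, B.Infinite → A ⊆ B → B ∈ H) ∧
  (∀ A ∈ H, ∀ a : Finset ℕ, ↑a ⊆ A →
    (∀ B ∈ H ∩ ENbhdN (depth A a) A, (ENbhd a B).Nonempty) ∧
    (∀ B ∈ H, B ⊆ A → (ENbhd a B).Nonempty →
      ∃ A' ∈ H ∩ ENbhdN (depth A a) A,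
        (ENbhd a A').Nonempty ∧ ENbhd a A' ⊆ ENbhd a B)) ∧
  (∀ A ∈ H, ∀ a : Finset ℕ, ↑a ⊆ A → ∀ O : Set (Finset ℕ),
    ∃ B ∈ H ∩ ENbhdN (depth A a) A,
      oneStepExt a B ⊆ O ∨ oneStepExt a B ∩ O = ∅)

/-- `D` is dense open in `S` (with respect to `⊆`). -/
def DenseOpenIn (D S : Set (Set ℕ)) : Prop :=
  (∀ A ∈ S, ∃ B ∈ D, B ⊆ A) ∧ (∀ A ∈ S, ∀ B ∈ D, A ⊆ B → A ∈ D)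

/-- `C` diagonalizes the family `{A_a}`: for every finite `a ⊆ C`, `[a,C] ⊆ [a,A_a]`. -/
def Diagonalizes (C : Set ℕ) (Afam : Finset ℕ → Set ℕ) : Prop :=
  ∀ a : Finset ℕ, ↑a ⊆ C → ENbhd a C ⊆ ENbhd a (Afam a)

/-- `H` is a semiselective coideal. -/
def Semiselective (H : Set (Set ℕ)) : Prop :=
  IsCoideal H ∧
  ∀ A ∈ H, ∀ Dfam : Finset ℕ → Set (Set ℕ),
    (∀ a : Finset ℕ, ↑a ⊆ A → DenseOpenIn (Dfam a) (H ∩ ENbhdN (depth A a) A)) →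
    ∀ B ∈ H, B ⊆ A →
      ∃ C ∈ H, C ⊆ B ∧ ∃ Afam : Finset ℕ → Set ℕ,
        (∀ a : Finset ℕ, ↑a ⊆ A → Afam a ∈ Dfam a) ∧ Diagonalizes C Afam

/-- `X` is `H`-Ramsey. -/
def HRamsey (H X : Set (Set ℕ)) : Prop :=
  ∀ a : Finset ℕ, ∀ A ∈ H, (ENbhd a A).Nonempty →
    ∃ B ∈ ENbhd a A ∩ H, ENbhd a B ⊆ X ∨ ENbhd a B ∩ X = ∅

/-- `X` is `H`-Ramsey null. -/
def HRamseyNull (H X : Set (Set ℕ)) : Prop :=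
  ∀ a : Finset ℕ, ∀ A ∈ H, (ENbhd a A).Nonempty →
    ∃ B ∈ ENbhd a A ∩ H, ENbhd a B ∩ X = ∅

/-- `X` is `H`-Baire. -/
def HBaire (H X : Set (Set ℕ)) : Prop :=
  ∀ a : Finset ℕ, ∀ A ∈ H, (ENbhd a A).Nonempty →
    ∃ (b : Finset ℕ) (B : Set ℕ), B ∈ H ∧ (ENbhd b B).Nonempty ∧
      ENbhd b B ⊆ ENbhd a A ∧ (ENbhd b B ⊆ X ∨ ENbhd b B ∩ X = ∅)

/-- `X` is `H`-meager. -/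
def HMeager (H X : Set (Set ℕ)) : Prop :=
  ∀ a : Finset ℕ, ∀ A ∈ H, (ENbhd a A).Nonempty →
    ∃ (b : Finset ℕ) (B : Set ℕ), B ∈ H ∧ (ENbhd b B).Nonempty ∧
      ENbhd b B ⊆ ENbhd a A ∧ ENbhd b B ∩ X = ∅

/-- `Exp(H) = {[n,A] : n ∈ ℕ, A ∈ H}`. -/
def ExpH (H : Set (Set ℕ)) : Set (Set (Set ℕ)) :=
  {S | ∃ (n : ℕ) (A : Set ℕ), A ∈ H ∧ S = ENbhdN n A}

/-- `X` is `Exp(H)`-nowhere dense. -/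
def ExpNwd (H X : Set (Set ℕ)) : Prop :=
  ∀ S ∈ ExpH H, ∃ T ∈ ExpH H, T ⊆ S ∧ T ∩ X = ∅

/-- Combinatorial forcing: `A` accepts `a` (relative to `H` and `F`). -/
def Accepts (H : Set (Set ℕ)) (F : Set (Finset ℕ)) (A : Set ℕ) (a : Finset ℕ) : Prop :=
  ∀ B ∈ H ∩ ENbhdN (depth A a) A, ∃ n : ℕ, ellR n B ∈ F

/-- Combinatorial forcing: `A` rejects `a` (relative to `H` and `F`). -/
def Rejects (H : Set (Set ℕ)) (F : Set (Finset ℕ)) (A : Set ℕ) (a : Finset ℕ) : Prop :=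
  ∀ B ∈ H ∩ ENbhdN (depth A a) A, ¬ Accepts H F B a

/-- `A ≤* B` : `A` is an almost-reduction of `B`. -/
def AlmostRed (A B : Set ℕ) : Prop :=
  ∃ a : Finset ℕ, ↑a ⊆ A ∧ ENbhd a A ⊆ ENbhd a B

/-- `D ⊆ H` is dense open in the preorder `(H, ≤*)`. -/
def DenseOpenStar (H D : Set (Set ℕ)) : Prop :=
  D ⊆ H ∧ (∀ A ∈ H, ∃ B ∈ D, AlmostRed B A) ∧
  (∀ A ∈ H, ∀ B ∈ D, AlmostRed A B → A ∈ D)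

/-- The family `{A_a}` is filtered by `⊆` (indexed by the finite subsets of `A`). -/
def FilteredFamily (A : Set ℕ) (Afam : Finset ℕ → Set ℕ) : Prop :=
  ∀ a b : Finset ℕ, ↑a ⊆ A → ↑b ⊆ A →
    ∃ c : Finset ℕ, ↑c ⊆ A ∧ Afam c ⊆ Afam a ∧ Afam c ⊆ Afam b

/-- `H` is a selective coideal. -/
def SelectiveCoideal (H : Set (Set ℕ)) : Prop :=
  IsCoideal H ∧
  ∀ A ∈ H, ∀ Afam : Finset ℕ → Set ℕ,
    (∀ a : Finset ℕ, ↑a ⊆ A → Afam a ∈ H ∧ Afam a ⊆ A ∧ (ENbhd a (Afam a)).Nonempty) →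
    FilteredFamily A Afam →
    ∃ B ∈ H, B ⊆ A ∧ Diagonalizes B Afam

/-- `U ⊆ ℕ^[∞]` is a filter on `(ℕ^[∞], ⊆)`. -/
def IsEFilter (U : Set (Set ℕ)) : Prop :=
  (∀ A ∈ U, A.Infinite) ∧
  (∀ A ∈ U, ∀ B : Set ℕ, B.Infinite → A ⊆ B → B ∈ U) ∧
  (∀ A ∈ U, ∀ B ∈ U, ∀ a : Finset ℕ,
    (ENbhd a A).Nonempty → (ENbhd a B).Nonempty →
      ∃ C ∈ U, C ∈ ENbhd a A ∩ ENbhd a B)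

/-- `U` is an ultrafilter: a maximal filter satisfying A3 mod U. -/
def IsEUltrafilter (U : Set (Set ℕ)) : Prop :=
  IsEFilter U ∧
  (∀ U' : Set (Set ℕ), IsEFilter U' → U ⊆ U' → U' = U) ∧
  (∀ A ∈ U, ∀ a : Finset ℕ, ↑a ⊆ A →
    (∀ B ∈ U ∩ ENbhdN (depth A a) A, (ENbhd a B).Nonempty) ∧
    (∀ B ∈ U, B ⊆ A → (ENbhd a B).Nonempty →
      ∃ A' ∈ U ∩ ENbhdN (depth A a) A,
        (ENbhd a A').Nonempty ∧ ENbhd a A' ⊆ ENbhd a B))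

/-- `U` is a selective ultrafilter. -/
def SelectiveUltrafilter (U : Set (Set ℕ)) : Prop :=
  IsEUltrafilter U ∧
  ∀ A ∈ U, ∀ Afam : Finset ℕ → Set ℕ,
    (∀ a : Finset ℕ, ↑a ⊆ A → Afam a ∈ U ∧ Afam a ⊆ A ∧ (ENbhd a (Afam a)).Nonempty) →
    FilteredFamily A Afam →
    ∃ B ∈ U, B ⊆ A ∧ Diagonalizes B Afam

/-- The conditions of the Mathias poset `M_U` : pairs `(a, A)` with `A ∈ U`, `[a,A] ≠ ∅`. -/
def MathiasCond (U : Set (Set ℕ)) : Set (Finset ℕ × Set ℕ) :=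
  {p | p.2 ∈ U ∧ (ENbhd p.1 p.2).Nonempty}

/-- `D` is a dense open subset of the Mathias poset `M_U`
(ordered by `(a,A) ≤ (b,B) ↔ [a,A] ⊆ [b,B]`). -/
def MathiasDenseOpen (U : Set (Set ℕ)) (D : Set (Finset ℕ × Set ℕ)) : Prop :=
  D ⊆ MathiasCond U ∧
  (∀ p ∈ MathiasCond U, ∃ q ∈ D, ENbhd q.1 q.2 ⊆ ENbhd p.1 p.2) ∧
  (∀ p ∈ MathiasCond U, ∀ q ∈ D, ENbhd p.1 p.2 ⊆ ENbhd q.1 q.2 → p ∈ D)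

/-- `A` captures `(a, D)`. -/
def Captures (U : Set (Set ℕ)) (D : Set (Finset ℕ × Set ℕ))
    (a : Finset ℕ) (A : Set ℕ) : Prop :=
  A ∈ U ∧ (ENbhd a A).Nonempty ∧
  ∀ B ∈ ENbhd a A, ∃ m : ℕ, m > a.card ∧ (ellR m B, A) ∈ D

/-!
Combinatorial forcing. Say that `E` accepts `b` when every infinite `C` with `b ⊏ C` and
`C \ b ⊆ E` has an initial segment in `F`, and that `Y` rejects `b` when no member of `H`
inside `Y` accepts `b`. A first diagonalization gives `C₀ ∈ H` deciding every `a ∪ c` with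
`c ⊆ C₀` finite. If `C₀` accepts `a`, then `B = a ∪ {x ∈ C₀ | x > a}` satisfies the second
alternative. Otherwise, homogenizing one-step extensions (A4 mod `H`) pushes rejection of `b`
to all `b ∪ {x}` with `x` in some member of `H`, and a second diagonalization gives `C₁ ∈ H`
such that, by induction on the largest element of `c`, `C₀` rejects `a ∪ c` for every finite
`c ⊆ C₁`. Members of `F` are accepted by every set, so `B = a ∪ {x ∈ C₁ | x > a}` satisfies
the first alternative.
-/

def above (b : Finset ℕ) (X : Set ℕ) : Set ℕ := {x ∈ X | ∀ y ∈ b, y < x}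

section Above

variable {b c : Finset ℕ} {X Y : Set ℕ}

lemma above_subset (b : Finset ℕ) (X : Set ℕ) : above b X ⊆ X := fun _ hx => hx.1

lemma above_mono (h : X ⊆ Y) : above b X ⊆ above b Y := fun _ hx => ⟨h hx.1, hx.2⟩

lemma above_union_subset_right (b c : Finset ℕ) (X : Set ℕ) : above (b ∪ c) X ⊆ above c X :=
  fun _ hx => ⟨hx.1, fun y hy => hx.2 y (Finset.mem_union_right b hy)⟩

lemma diff_Iic_subset_above (b : Finset ℕ) (X : Set ℕ) : X \ Iic (b.sup id) ⊆ above b X :=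
  fun _ hx => ⟨hx.1, fun _ hy => (Finset.le_sup (f := id) hy).trans_lt (not_le.mp hx.2)⟩

lemma above_infinite (hX : X.Infinite) (b : Finset ℕ) : (above b X).Infinite :=
  (hX.sdiff (finite_Iic _)).mono (diff_Iic_subset_above b X)

lemma mem_of_mem_union_above {x : ℕ} (hx : x ∈ ↑b ∪ above b X) (hxb : x ∉ b) : x ∈ X :=
  hx.elim (fun h => absurd h hxb) (fun h => h.1)

lemma isInitSeg_union_above (b : Finset ℕ) (X : Set ℕ) : IsInitSeg b (↑b ∪ above b X) :=
  ⟨subset_union_left, fun _ hx hxb => (hx.resolve_left hxb).2⟩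

lemma union_above_mem_eNbhd {A : Set ℕ} (hX : X.Infinite) (hb : ↑b ⊆ A) (hXA : X ⊆ A) :
    ↑b ∪ above b X ∈ ENbhd b A :=
  ⟨(above_infinite hX b).mono subset_union_right, isInitSeg_union_above b X,
    union_subset hb ((above_subset b X).trans hXA)⟩

lemma Diagonalizes.above_subset {Afam : Finset ℕ → Set ℕ} (hdiag : Diagonalizes X Afam)
    (hX : X.Infinite) (hc : ↑c ⊆ X) : above c X ⊆ Afam c :=
  subset_union_right.trans (hdiag c hc (union_above_mem_eNbhd hX hc subset_rfl)).2.2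

end Above

section InitSeg

variable {b : Finset ℕ} {C : Set ℕ}

lemma ellR_card_eq_of_isInitSeg (h : IsInitSeg b C) : ellR b.card C = b := by
  classical
  refine (Finset.eq_of_subset_of_card_le (fun x hx => ?_) ?_).symm
  · have hcount : Nat.count (· ∈ C) x < b.card := by
      rw [Nat.count_eq_card_filter_range]
      refine Finset.card_lt_card ⟨fun y hy => ?_, fun hb => ?_⟩
      · obtain ⟨hyx, hyC⟩ := Finset.mem_filter.mp hy
        by_contra hyb
        exact absurd (h.2 y hyC hyb x hx) (not_lt.mpr (Finset.mem_range.mp hyx).le)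
      · exact (Finset.mem_filter.mp (hb hx)).1 |> Finset.mem_range.mp |> lt_irrefl x
    exact Finset.mem_image.mpr ⟨_, Finset.mem_range.mpr hcount, Nat.nth_count (h.1 hx)⟩
  · exact Finset.card_image_le.trans (Finset.card_range _).le

lemma IsInitSeg.exists_insert (hC : C.Infinite) (h : IsInitSeg b C) :
    ∃ x ∈ above b C, IsInitSeg (insert x b) C := by
  have hne : (C \ ↑b).Nonempty := (hC.sdiff b.finite_toSet).nonempty
  have hx : sInf (C \ ↑b) ∈ C \ ↑b := Nat.sInf_mem hne
  refine ⟨sInf (C \ ↑b), ⟨hx.1, h.2 _ hx.1 hx.2⟩, ?_, fun z hzC hz y hy => ?_⟩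
  · simpa [Finset.coe_insert] using insert_subset hx.1 h.1
  · have hzb : z ∉ b := fun h' => hz (Finset.mem_insert_of_mem h')
    rcases Finset.mem_insert.mp hy with rfl | hy
    · exact lt_of_le_of_ne (Nat.sInf_le ⟨hzC, hzb⟩) fun he => hz (he ▸ Finset.mem_insert_self _ _)
    · exact h.2 z hzC hzb y hy

end InitSeg

namespace IsCoideal

variable {H : Set (Set ℕ)} (hH : IsCoideal H) {D : Set ℕ}
include hH

lemma infinite (hD : D ∈ H) : D.Infinite := hH.1 D hD

lemma mem_of_subset (hD : D ∈ H) {E : Set ℕ} (hDE : D ⊆ E) : E ∈ H :=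
  hH.2.1 D hD E ((hH.infinite hD).mono hDE) hDE

lemma diff_finite_mem (hD : D ∈ H) {s : Set ℕ} (hs : s.Finite) : D \ s ∈ H := by
  -- homogenize the singletons of `D` for avoiding `s`; as `B` is infinite, some avoid it
  obtain ⟨B, ⟨hBH, -, -, hBD⟩, hB⟩ := hH.2.2.2 D hD ∅ (by simp) {d | ∀ x ∈ d, x ∉ s}
  rcases hB with hB | hB
  · refine hH.mem_of_subset hBH fun x hx => ⟨hBD hx, ?_⟩
    exact hB ⟨x, hx, by simp, rfl⟩ x (Finset.mem_insert_self x ∅)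
  · obtain ⟨x, hxB, hxs⟩ := ((hH.infinite hBH).sdiff hs).nonempty
    have hx : insert x ∅ ∈ oneStepExt ∅ B ∩ {d | ∀ x ∈ d, x ∉ s} :=
      ⟨⟨x, hxB, by simp, rfl⟩, by simpa using hxs⟩
    exact (eq_empty_iff_forall_notMem.mp hB _ hx).elim

lemma above_mem (hD : D ∈ H) (b : Finset ℕ) : above b D ∈ H :=
  hH.mem_of_subset (hH.diff_finite_mem hD (finite_Iic _)) (diff_Iic_subset_above b D)

lemma union_above_mem (hD : D ∈ H) (b : Finset ℕ) : ↑b ∪ above b D ∈ H :=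
  hH.mem_of_subset (hH.above_mem hD b) subset_union_right

lemma exists_insert_homogeneous (hD : D ∈ H) (b : Finset ℕ) (O : Set (Finset ℕ)) :
    ∃ B ∈ H, B ⊆ above b D ∧ ((∀ x ∈ B, insert x b ∈ O) ∨ ∀ x ∈ B, insert x b ∉ O) := by
  obtain ⟨B, ⟨hBH, -, -, hBD⟩, hB⟩ :=
    hH.2.2.2 _ (hH.mem_of_subset hD subset_union_right) b subset_union_left O
  have hext : ∀ x ∈ above b B, insert x b ∈ oneStepExt b B := fun x hx => ⟨x, hx.1, hx.2, rfl⟩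
  refine ⟨above b B, hH.above_mem hBH b, fun x hx => ⟨?_, hx.2⟩, ?_⟩
  · exact (hBD hx.1).resolve_left fun hxb => lt_irrefl x (hx.2 x hxb)
  · refine hB.imp (fun hO x hx => hO (hext x hx)) (fun hO x hx hxO => ?_)
    exact eq_empty_iff_forall_notMem.mp hO _ ⟨hext x hx, hxO⟩

end IsCoideal

lemma Semiselective.exists_diagonal {H : Set (Set ℕ)} (hH : Semiselective H) {A : Set ℕ}
    (hA : A ∈ H) (P : Finset ℕ → Set ℕ → Prop)
    (hdense : ∀ c : Finset ℕ, ↑c ⊆ A → ∀ E ∈ H, E ⊆ A → ∃ E' ∈ H, E' ⊆ E ∧ P c E')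
    (hanti : ∀ c E E', E ⊆ E' → P c E' → P c E) :
    ∃ C ∈ H, C ⊆ A ∧ ∀ c : Finset ℕ, ↑c ⊆ C → P c (above c C) := by
  have hD : ∀ c : Finset ℕ, ↑c ⊆ A →
      DenseOpenIn {E | E ∈ H ∧ E ⊆ A ∧ P c E} (H ∩ ENbhdN (depth A c) A) := by
    refine fun c hc => ⟨fun E ⟨hEH, _, _, hEA⟩ => ?_, fun E ⟨hEH, _, _, hEA⟩ E' hE' hEE' => ?_⟩
    · obtain ⟨E', hE'H, hE'E, hP⟩ := hdense c hc E hEH hEA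
      exact ⟨E', ⟨hE'H, hE'E.trans hEA, hP⟩, hE'E⟩
    · exact ⟨hEH, hEA, hanti c E E' hEE' hE'.2.2⟩
  obtain ⟨C, hCH, hCA, Afam, hAfam, hdiag⟩ := hH.2 A hA _ hD A hA subset_rfl
  refine ⟨C, hCH, hCA, fun c hc => hanti c _ _ ?_ (hAfam c (hc.trans hCA)).2.2⟩
  exact hdiag.above_subset (hH.1.infinite hCH) hc

section Forcing

variable {H : Set (Set ℕ)} {F : Set (Finset ℕ)} {b : Finset ℕ} {E Y : Set ℕ}

def AcceptsAll (F : Set (Finset ℕ)) (E : Set ℕ) (b : Finset ℕ) : Prop :=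
  ∀ C : Set ℕ, C.Infinite → IsInitSeg b C → C \ ↑b ⊆ E → ∃ n, ellR n C ∈ F

def RejectsAll (H : Set (Set ℕ)) (F : Set (Finset ℕ)) (Y : Set ℕ) (b : Finset ℕ) : Prop :=
  ∀ E ∈ H, E ⊆ Y → ¬ AcceptsAll F E b

def Decides (H : Set (Set ℕ)) (F : Set (Finset ℕ)) (Y : Set ℕ) (b : Finset ℕ) : Prop :=
  AcceptsAll F Y b ∨ RejectsAll H F Y b

lemma acceptsAll_of_mem (hb : b ∈ F) : AcceptsAll F E b :=
  fun _ _ hC _ => ⟨b.card, (ellR_card_eq_of_isInitSeg hC).symm ▸ hb⟩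

lemma AcceptsAll.mono {E' : Set ℕ} (h : AcceptsAll F E b) (hE : above b E' ⊆ E) :
    AcceptsAll F E' b :=
  fun C hC hbC hCE => h C hC hbC fun z hz => hE ⟨hCE hz, hbC.2 z hz.1 hz.2⟩

lemma acceptsAll_of_forall_insert (h : ∀ x ∈ above b E, AcceptsAll F E (insert x b)) :
    AcceptsAll F E b := by
  intro C hC hbC hCE
  obtain ⟨x, hx, hxC⟩ := hbC.exists_insert hC
  refine h x ⟨hCE ⟨hx.1, fun hxb => lt_irrefl x (hx.2 x hxb)⟩, hx.2⟩ C hC hxC ?_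
  exact (sdiff_subset_sdiff_right (by simp)).trans hCE

lemma RejectsAll.mono (hH : IsCoideal H) {Y' : Set ℕ} (h : RejectsAll H F Y b)
    (hY : above b Y' ⊆ Y) : RejectsAll H F Y' b :=
  fun E hEH hEY hacc => h (above b E) (hH.above_mem hEH b) ((above_mono hEY).trans hY)
    (hacc.mono ((above_subset b _).trans (above_subset b E)))

lemma Decides.mono (hH : IsCoideal H) {Y' : Set ℕ} (h : Decides H F Y b)
    (hY : above b Y' ⊆ Y) : Decides H F Y' b :=
  h.imp (fun h => h.mono hY) (fun h => h.mono hH hY)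

lemma exists_decides (hE : E ∈ H) : ∃ E' ∈ H, E' ⊆ E ∧ Decides H F E' b := by
  by_cases hacc : ∃ E' ∈ H, E' ⊆ E ∧ AcceptsAll F E' b
  · obtain ⟨E', hE'H, hE'E, h⟩ := hacc
    exact ⟨E', hE'H, hE'E, Or.inl h⟩
  · exact ⟨E, hE, subset_rfl, Or.inr fun E' hE'H hE'E h => hacc ⟨E', hE'H, hE'E, h⟩⟩

lemma exists_rejectsAll_insert (hH : IsCoideal H) (hE : E ∈ H) (hEY : E ⊆ Y)
    (hrej : RejectsAll H F Y b) (hdec : ∀ x ∈ above b E, Decides H F Y (insert x b)) :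
    ∃ E' ∈ H, E' ⊆ E ∧ ∀ x ∈ E', RejectsAll H F Y (insert x b) := by
  obtain ⟨B, hBH, hBE, hB⟩ := hH.exists_insert_homogeneous hE b {d | AcceptsAll F Y d}
  have hBY : B ⊆ Y := hBE.trans ((above_subset b E).trans hEY)
  rcases hB with hacc | hnacc
  · refine absurd (acceptsAll_of_forall_insert fun x hx => ?_) (hrej B hBH hBY)
    exact (hacc x hx.1).mono ((above_subset _ B).trans hBY)
  · exact ⟨B, hBH, hBE.trans (above_subset b E),
      fun x hx => (hdec x (hBE hx)).resolve_left (hnacc x hx)⟩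

end Forcing

section Diagonal

variable {H : Set (Set ℕ)} (hH : Semiselective H) (F : Set (Finset ℕ))
include hH

lemma exists_decides_union {A : Set ℕ} (hA : A ∈ H) (a : Finset ℕ) :
    ∃ C₀ ∈ H, C₀ ⊆ A ∧ ∀ c : Finset ℕ, ↑c ⊆ C₀ → Decides H F C₀ (a ∪ c) := by
  obtain ⟨C₀, hC₀H, hC₀A, hdec⟩ := hH.exists_diagonal hA (fun c E => Decides H F E (a ∪ c))
    (fun _ _ _ hE _ => exists_decides hE)
    (fun _ _ _ hEE' h => h.mono hH.1 ((above_subset _ _).trans hEE'))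
  exact ⟨C₀, hC₀H, hC₀A, fun c hc => (hdec c hc).mono hH.1 (above_union_subset_right a c C₀)⟩

lemma exists_rejectsAll_union {C₀ : Set ℕ} (hC₀ : C₀ ∈ H) {a : Finset ℕ}
    (hdec : ∀ c : Finset ℕ, ↑c ⊆ C₀ → Decides H F C₀ (a ∪ c)) (hrej : RejectsAll H F C₀ a) :
    ∃ C₁ ∈ H, C₁ ⊆ C₀ ∧ ∀ c : Finset ℕ, ↑c ⊆ C₁ → RejectsAll H F C₀ (a ∪ c) := by
  classical
  obtain ⟨C₁, hC₁H, hC₁C₀, hstep⟩ := hH.exists_diagonal hC₀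
    (fun c E => RejectsAll H F C₀ (a ∪ c) → ∀ x ∈ E, RejectsAll H F C₀ (insert x (a ∪ c)))
    (fun c hc E hE hEC₀ => by
      by_cases hrejc : RejectsAll H F C₀ (a ∪ c)
      · obtain ⟨E', hE'H, hE'E, hE'⟩ := exists_rejectsAll_insert hH.1 hE hEC₀ hrejc
          fun x hx => Finset.union_insert x a c ▸
            hdec (insert x c) (by simpa using insert_subset (hEC₀ hx.1) hc)
        exact ⟨E', hE'H, hE'E, fun _ => hE'⟩
      · exact ⟨E, hE, subset_rfl, fun h => absurd h hrejc⟩)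
    (fun _ _ _ hEE' h hrejc x hx => h hrejc x (hEE' hx))
  refine ⟨C₁, hC₁H, hC₁C₀, fun c => ?_⟩
  induction c using Finset.induction_on_max with
  | empty => simpa using hrej
  | insert x c hxc ih =>
    intro hc
    have hcC₁ : ↑c ⊆ C₁ := (Finset.coe_subset.mpr (Finset.subset_insert x c)).trans hc
    rw [Finset.union_insert]
    exact hstep c hcC₁ (ih hcC₁) x ⟨hc (Finset.mem_insert_self x c), hxc⟩

end Diagonal

/-- Relativized semiselective Galvin lemma for the Ellentuck space. -/
theorem semiselective_galvin_rel (H : Set (Set ℕ)) (hH : Semiselective H)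
    (F : Set (Finset ℕ)) (A : Set ℕ) (hA : A ∈ H) (a : Finset ℕ) (ha : ↑a ⊆ A) :
    ∃ B ∈ H ∩ ENbhd a A,
      ((∀ b ∈ F, ¬(a ⊆ b ∧ (∀ x ∈ b \ a, ∀ y ∈ a, y < x) ∧ ↑(b \ a) ⊆ B)) ∨
        (∀ C ∈ ENbhd a B, ∃ n : ℕ, ellR n C ∈ F)) := by
  have hCo := hH.1
  obtain ⟨C₀, hC₀H, hC₀A, hdec⟩ := exists_decides_union hH F hA a
  have witness : ∀ {X : Set ℕ}, X ∈ H → X ⊆ A → ↑a ∪ above a X ∈ H ∩ ENbhd a A :=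
    fun hX hXA => ⟨hCo.union_above_mem hX a, union_above_mem_eNbhd (hCo.infinite hX) ha hXA⟩
  rcases (by simpa using hdec ∅ (by simp) : Decides H F C₀ a) with hacc | hrej
  · refine ⟨_, witness hC₀H hC₀A, Or.inr fun C ⟨hC, haC, hCB⟩ => hacc C hC haC ?_⟩
    exact fun z hz => mem_of_mem_union_above (hCB hz.1) hz.2
  · obtain ⟨C₁, hC₁H, hC₁C₀, hrej₁⟩ := exists_rejectsAll_union hH F hC₀H hdec hrej
    refine ⟨_, witness hC₁H (hC₁C₀.trans hC₀A), Or.inl fun b hb ⟨hab, _, hbB⟩ => ?_⟩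
    have hbC₁ : ↑(b \ a) ⊆ C₁ := fun z hz =>
      mem_of_mem_union_above (hbB hz) (Finset.mem_sdiff.mp hz).2
    have hrejb := hrej₁ _ hbC₁
    rw [Finset.union_sdiff_of_subset hab] at hrejb
    exact hrejb C₀ hC₀H subset_rfl (acceptsAll_of_mem hb)
end

section
/- Let H ⊆ ℕ^[∞] be a semiselective coideal. Then every subset of ℕ^[∞] that is open in the metric topology (the topology generated by the basic sets [b] = {A ∈ ℕ^[∞] : b ⊏ A} for finite b ⊆ ℕ, equivalently the topology inherited from the product topology on 2^ℕ) is H-Ramsey. -/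
open Set

/-! ### Auxiliary machinery for the proof -/

/-- `x` is above every element of `t`. -/
def EGd (t : Finset ℕ) (x : ℕ) : Prop := ∀ y ∈ t, y < x

lemma egd_union {s t : Finset ℕ} {x : ℕ} : EGd (s ∪ t) x ↔ EGd s x ∧ EGd t x := by
  simp [EGd, or_imp, forall_and]

lemma egd_not_mem {t : Finset ℕ} {x : ℕ} (h : EGd t x) : x ∉ t :=
  fun hx => lt_irrefl x (h x hx)

lemma boundedFin (t : Finset ℕ) : {x : ℕ | ¬ EGd t x}.Finite := by
  have hsub : {x : ℕ | ¬ EGd t x} ⊆ ⋃ y ∈ (t : Set ℕ), Set.Iic y := by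
    intro x hx
    simp only [EGd, not_forall, Set.mem_setOf_eq] at hx
    obtain ⟨y, hy, hxy⟩ := hx
    exact Set.mem_biUnion hy (not_lt.mp hxy)
  exact (t.finite_toSet.biUnion fun y _ => Set.finite_Iic y).subset hsub

lemma tail_infinite {C : Set ℕ} (hC : C.Infinite) (t : Finset ℕ) :
    {x | x ∈ C ∧ EGd t x}.Infinite := by
  refine (hC.diff (boundedFin t)).mono ?_
  intro x hx
  exact ⟨hx.1, not_not.mp hx.2⟩

section ellRLemmas

variable {A : Set ℕ}

lemma setOf_infinite (hA : A.Infinite) : (setOf (· ∈ A)).Infinite := by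
  exact hA

lemma mem_ellR {n x : ℕ} : x ∈ ellR n A ↔ ∃ k < n, Nat.nth (· ∈ A) k = x := by
  simp [ellR]

lemma ellR_subset (hA : A.Infinite) (n : ℕ) : ↑(ellR n A) ⊆ A := by
  intro x hx
  rw [Finset.mem_coe, mem_ellR] at hx
  obtain ⟨k, _, rfl⟩ := hx
  exact Nat.nth_mem_of_infinite (setOf_infinite hA) k

lemma ellR_zero : ellR 0 A = ∅ := by simp [ellR]

lemma ellR_initSeg (hA : A.Infinite) (n : ℕ) : IsInitSeg (ellR n A) A := by
  classical
  refine ⟨ellR_subset hA n, ?_⟩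
  intro x hxA hx y hy
  rw [mem_ellR] at hy hx
  obtain ⟨k, hk, rfl⟩ := hy
  have hcount : n ≤ Nat.count (· ∈ A) x := by
    by_contra h
    push_neg at h
    exact hx ⟨_, h, Nat.nth_count hxA⟩
  have h2 := (Nat.nth_lt_nth (setOf_infinite hA)).mpr (lt_of_lt_of_le hk hcount)
  rwa [Nat.nth_count hxA] at h2

lemma depth_exists (hA : A.Infinite) {c : Finset ℕ} (hc : ↑c ⊆ A) :
    ∃ n, c ⊆ ellR n A := by
  classical
  refine ⟨c.sup (Nat.count (· ∈ A)) + 1, ?_⟩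
  intro x hx
  rw [mem_ellR]
  exact ⟨Nat.count (· ∈ A) x, Nat.lt_succ_of_le (Finset.le_sup hx),
    Nat.nth_count (hc hx)⟩

lemma depth_spec (hA : A.Infinite) {c : Finset ℕ} (hc : ↑c ⊆ A) :
    c ⊆ ellR (depth A c) A :=
  Nat.sInf_mem (depth_exists hA hc)

lemma depth_empty : depth A ∅ = 0 := by
  have : (0 : ℕ) ∈ {n | (∅ : Finset ℕ) ⊆ ellR n A} := by simp
  exact Nat.eq_zero_of_le_zero (Nat.sInf_le this)

lemma depth_le_mem (hA : A.Infinite) {c : Finset ℕ} (hc : c.Nonempty) (hcA : ↑c ⊆ A) :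
    ∀ y ∈ ellR (depth A c) A, ∃ z ∈ c, y ≤ z := by
  intro y hy
  by_contra h
  push_neg at h
  have hd0 : depth A c ≠ 0 := by
    intro h0
    have hsp := depth_spec hA hcA
    rw [h0, ellR_zero] at hsp
    obtain ⟨z, hz⟩ := hc
    exact absurd (hsp hz) (Finset.notMem_empty z)
  have hsub : c ⊆ ellR (depth A c - 1) A := by
    intro z hz
    have hz' := depth_spec hA hcA hz
    rw [mem_ellR] at hz' hy ⊢
    obtain ⟨j, hj, rfl⟩ := hz'
    obtain ⟨k, hk, hky⟩ := hy
    subst hky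
    have hjk : j < k := (Nat.nth_lt_nth (setOf_infinite hA)).mp (h _ hz)
    exact ⟨j, by omega, rfl⟩
  have hle : depth A c ≤ depth A c - 1 := Nat.sInf_le hsub
  omega

end ellRLemmas

/-- The `a`-massage of a set `D`. -/
def mset (a : Finset ℕ) (D : Set ℕ) : Set ℕ := ↑a ∪ {x | x ∈ D ∧ EGd a x}

lemma mset_mono {a : Finset ℕ} {D E : Set ℕ} (h : D ⊆ E) : mset a D ⊆ mset a E := by
  intro x hx
  rcases hx with hx | hx
  · exact Or.inl hx
  · exact Or.inr ⟨h hx.1, hx.2⟩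

lemma mset_initSeg (a : Finset ℕ) (D : Set ℕ) : IsInitSeg a (mset a D) := by
  refine ⟨Set.subset_union_left, ?_⟩
  intro x hx hxa y hy
  rcases hx with hx | hx
  · exact absurd hx (by simpa using hxa)
  · exact hx.2 y hy

lemma mset_subset {a : Finset ℕ} {D A : Set ℕ} (ha : ↑a ⊆ A) (hD : D ⊆ A) :
    mset a D ⊆ A := by
  intro x hx
  rcases hx with hx | hx
  · exact ha hx
  · exact hD hx.1

lemma mset_eq_of_initSeg {a : Finset ℕ} {B : Set ℕ} (h : IsInitSeg a B) :
    mset a B = B := by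
  apply Set.Subset.antisymm
  · exact mset_subset h.1 Set.Subset.rfl
  · intro x hx
    by_cases hxa : x ∈ a
    · exact Or.inl hxa
    · exact Or.inr ⟨hx, h.2 x hx hxa⟩

lemma mem_of_mem_mset {a : Finset ℕ} {D : Set ℕ} {x : ℕ}
    (hx : x ∈ mset a D) (hgd : EGd a x) : x ∈ D := by
  rcases hx with hx | hx
  · exact absurd hx (by simpa using egd_not_mem hgd)
  · exact hx.1

section CoidealLemmas

variable {H X : Set (Set ℕ)}

/-- `B` accepts `c` (relative to `X`). -/
def EAcc (X : Set (Set ℕ)) (B : Set ℕ) (c : Finset ℕ) : Prop :=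
  ∀ C : Set ℕ, C.Infinite → IsInitSeg c C → C \ ↑c ⊆ B → C ∈ X

/-- `B` rejects `c` (relative to `H`, `X`). -/
def ERej (H X : Set (Set ℕ)) (B : Set ℕ) (c : Finset ℕ) : Prop :=
  ∀ D ∈ H, D ⊆ B → ¬ EAcc X D c

lemma eacc_anti {B B' : Set ℕ} {c : Finset ℕ} (h : B' ⊆ B) (ha : EAcc X B c) :
    EAcc X B' c :=
  fun C h1 h2 h3 => ha C h1 h2 (h3.trans h)

lemma erej_anti {B B' : Set ℕ} {c : Finset ℕ} (h : B' ⊆ B) (hr : ERej H X B c) :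
    ERej H X B' c :=
  fun D hD hDB => hr D hD (hDB.trans h)

lemma tail_mem_H (hCo : IsCoideal H) {A : Set ℕ} (hA : A ∈ H) (t : Finset ℕ) :
    {x | x ∈ A ∧ EGd t x} ∈ H := by
  obtain ⟨hInf, hUp, _hA3, hA4⟩ := hCo
  obtain ⟨B, ⟨hBH, hBN⟩, hB⟩ := hA4 A hA ∅ (by simp)
    {f | ∃ x, ¬ EGd t x ∧ f = insert x ∅}
  have hBsub : B ⊆ A := hBN.2.2
  have hBInf : B.Infinite := hInf B hBH
  have hBt : ∀ x ∈ B, EGd t x := by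
    rcases hB with hB | hB
    · exfalso
      apply hBInf
      apply (boundedFin t).subset
      intro x hx
      have hmem : insert x (∅ : Finset ℕ) ∈ oneStepExt ∅ B :=
        ⟨x, hx, by simp [Finset.notMem_empty], rfl⟩
      obtain ⟨x', hx', heq⟩ := hB hmem
      have hxx : x = x' := by simpa using heq
      subst hxx
      exact hx'
    · intro x hx
      by_contra hgd
      have hmem : insert x (∅ : Finset ℕ) ∈
          oneStepExt ∅ B ∩ {f | ∃ x, ¬ EGd t x ∧ f = insert x ∅} :=
        ⟨⟨x, hx, by simp [Finset.notMem_empty], rfl⟩, ⟨x, hgd, rfl⟩⟩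
      rw [hB] at hmem
      exact hmem
  refine hUp B hBH _ (hBInf.mono ?_) ?_ <;>
    exact fun x hx => ⟨hBsub hx, hBt x hx⟩

lemma mset_mem_H (hCo : IsCoideal H) {D : Set ℕ} (hD : D ∈ H) (a : Finset ℕ) :
    mset a D ∈ H := by
  have htail := tail_mem_H hCo hD a
  exact hCo.2.1 _ htail _ ((hCo.1 _ htail).mono Set.subset_union_right)
    Set.subset_union_right

lemma decide_lemma {B : Set ℕ} (hB : B ∈ H) (c : Finset ℕ) :
    ∃ D ∈ H, D ⊆ B ∧ (EAcc X D c ∨ ERej H X D c) := by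
  by_cases h : ERej H X B c
  · exact ⟨B, hB, Set.Subset.rfl, Or.inr h⟩
  · unfold ERej at h
    push_neg at h
    obtain ⟨D, hD, hDB, hacc⟩ := h
    exact ⟨D, hD, hDB, Or.inl hacc⟩

end CoidealLemmas


section MainLemmas

variable {H X : Set (Set ℕ)}

lemma witness_mem_enbhd {c : Finset ℕ} {B : Set ℕ} (hB : B.Infinite) (hc : ↑c ⊆ B) :
    (↑c ∪ {x | x ∈ B ∧ EGd c x}) ∈ ENbhd c B := by
  refine ⟨(tail_infinite hB c).mono Set.subset_union_right, ⟨Set.subset_union_left, ?_⟩, ?_⟩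
  · intro x hx hxc y hy
    rcases hx with hx | hx
    · exact absurd hx (by simpa using hxc)
    · exact hx.2 y hy
  · intro x hx
    rcases hx with hx | hx
    · exact hc hx
    · exact hx.1

lemma diag_extract {C : Set ℕ} {Afam : Finset ℕ → Set ℕ}
    (hdiag : Diagonalizes C Afam) (hCinf : C.Infinite)
    {e : Finset ℕ} (he : ↑e ⊆ C) : ∀ x ∈ C, EGd e x → x ∈ Afam e := by
  intro x hx hgd
  have hW := hdiag e he (witness_mem_enbhd hCinf he)
  exact hW.2.2 (Or.inr ⟨hx, hgd⟩)

lemma key_r_fact {amb : Set ℕ} (hambInf : amb.Infinite) {e c : Finset ℕ}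
    (hec : e ⊆ c) (he : ↑e ⊆ amb) :
    ∀ x ∈ ellR (depth amb e) amb, ¬ EGd c x := by
  intro x hxr hgd
  rcases e.eq_empty_or_nonempty with rfl | hne
  · rw [depth_empty, ellR_zero] at hxr
    exact Finset.notMem_empty x hxr
  · obtain ⟨z, hz, hxz⟩ := depth_le_mem hambInf hne he x hxr
    exact absurd (hgd z (hec hz)) (by omega)

lemma patch_lemma (hCo : IsCoideal H) {amb : Set ℕ} (hamb : amb ∈ H)
    {e c : Finset ℕ} (hec : e ⊆ c) (he : ↑e ⊆ amb)
    {E : Set ℕ} (hE : E ∈ H ∩ ENbhdN (depth amb e) amb) :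
    ∃ D ∈ H ∩ ENbhdN (depth amb e) amb, D ⊆ E ∧ (EAcc X D c ∨ ERej H X D c) := by
  have hEH := hE.1
  have hEinit := hE.2.2.1
  have hEamb : E ⊆ amb := hE.2.2.2
  have hambInf : amb.Infinite := hCo.1 amb hamb
  set r := ellR (depth amb e) amb with hr
  have hkey := key_r_fact hambInf hec he
  obtain ⟨D0, hD0H, hD0E, hv⟩ := decide_lemma (X := X) hEH c
  have hDH : mset r D0 ∈ H := mset_mem_H hCo hD0H r
  have hDE : mset r D0 ⊆ E := by
    intro x hx
    rcases hx with hx | hx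
    · exact hEinit.1 hx
    · exact hD0E hx.1
  have hDtail : ∀ x ∈ mset r D0, EGd c x → x ∈ D0 := by
    intro x hx hgd
    rcases hx with hx | hx
    · exact absurd hgd (hkey x hx)
    · exact hx.1
  refine ⟨mset r D0, ⟨hDH, hCo.1 _ hDH, mset_initSeg r D0,
    mset_subset (ellR_subset hambInf _) (hD0E.trans hEamb)⟩, hDE, ?_⟩
  rcases hv with hacc | hrej
  · left
    intro C hCinf hCinit hCsub
    apply hacc C hCinf hCinit
    intro x hx
    have hgd : EGd c x := fun y hy => hCinit.2 x hx.1 (fun h => hx.2 h) y hy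
    exact hDtail x (hCsub hx) hgd
  · right
    intro D' hD' hD'sub hacc
    refine hrej {x | x ∈ D' ∧ EGd c x} (tail_mem_H hCo hD' c) ?_ ?_
    · exact fun x hx => hDtail x (hD'sub hx.1) hx.2
    · exact eacc_anti (fun x hx => hx.1) hacc

lemma fusion2_dense (hCo : IsCoideal H) {C1' C1 : Set ℕ} (hC1' : C1' ∈ H)
    (a : Finset ℕ) (hC1in : ∀ x ∈ C1', EGd a x → x ∈ C1)
    {e : Finset ℕ} (he : ↑e ⊆ C1') (hea : ∀ z ∈ e, EGd a z)
    (hrej : ERej H X C1 (a ∪ e))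
    {E : Set ℕ} (hE : E ∈ H ∩ ENbhdN (depth C1' e) C1') :
    ∃ D ∈ H ∩ ENbhdN (depth C1' e) C1', D ⊆ E ∧
      ∀ x ∈ D, EGd (a ∪ e) x → ¬ EAcc X C1 (insert x (a ∪ e)) := by
  have hEH := hE.1
  have hEinit := hE.2.2.1
  have hEsub : E ⊆ C1' := hE.2.2.2
  have hC1'Inf : C1'.Infinite := hCo.1 C1' hC1'
  set r := ellR (depth C1' e) C1' with hrdef
  have heE : ↑e ⊆ E := fun z hz => hEinit.1 (depth_spec hC1'Inf he hz)
  have hmEH : mset a E ∈ H := mset_mem_H hCo hEH a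
  have hsubaE : ↑(a ∪ e) ⊆ mset a E := by
    intro z hz
    rcases Finset.mem_union.mp (by simpa using hz) with hz' | hz'
    · exact Or.inl hz'
    · exact Or.inr ⟨heE hz', hea z hz'⟩
  obtain ⟨D, ⟨hDH, hDN⟩, hom⟩ := hCo.2.2.2 (mset a E) hmEH (a ∪ e) hsubaE
    {f | EAcc X C1 f}
  have hDsub : D ⊆ mset a E := hDN.2.2
  have hDC1'part : ∀ x ∈ D, EGd a x → x ∈ E := by
    intro x hx hgd
    exact mem_of_mem_mset (hDsub hx) hgd
  rcases hom with hom | hom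
  · -- contradiction with hrej
    exfalso
    set E2 : Set ℕ := {x | x ∈ D ∧ EGd (a ∪ e) x} with hE2def
    have hE2H : E2 ∈ H := tail_mem_H hCo hDH (a ∪ e)
    have hE2C1 : E2 ⊆ C1 := by
      intro x hx
      have hga : EGd a x := (egd_union.mp hx.2).1
      exact hC1in x (hEsub (hDC1'part x hx.1 hga)) hga
    refine hrej E2 hE2H hE2C1 ?_
    intro C hCinf hCinit hCsub
    have hCne : (C \ ↑(a ∪ e)).Nonempty := (hCinf.diff (a ∪ e).finite_toSet).nonempty
    set x0 := sInf (C \ ↑(a ∪ e)) with hx0def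
    have hx0 : x0 ∈ C \ ↑(a ∪ e) := Nat.sInf_mem hCne
    have hx0E2 : x0 ∈ E2 := hCsub hx0
    have hOx : EAcc X C1 (insert x0 (a ∪ e)) :=
      hom ⟨x0, hx0E2.1, hx0E2.2, rfl⟩
    apply hOx C hCinf
    · constructor
      · intro y hy
        rcases Finset.mem_insert.mp (Finset.mem_coe.mp hy) with rfl | hy'
        · exact hx0.1
        · exact hCinit.1 hy'
      · intro x hx hxm y hy
        have hxae : x ∉ (a ∪ e) := fun h => hxm (Finset.mem_insert_of_mem h)
        rcases Finset.mem_insert.mp hy with rfl | hy'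
        · have hxd : x ∈ C \ ↑(a ∪ e) := ⟨hx, by simpa using hxae⟩
          have hle : x0 ≤ x := Nat.sInf_le hxd
          have hne : x ≠ x0 := fun h => hxm (by rw [h]; exact Finset.mem_insert_self x0 _)
          omega
        · exact hCinit.2 x hx hxae y hy'
    · intro x hx
      have hxd : x ∈ C \ ↑(a ∪ e) :=
        ⟨hx.1, fun h => hx.2 (Finset.mem_coe.mpr (Finset.mem_insert_of_mem (Finset.mem_coe.mp h)))⟩
      exact hE2C1 (hCsub hxd)
  · -- homogeneous side: no one-step extension accepted
    have hnA : ∀ x ∈ D, EGd (a ∪ e) x → ¬ EAcc X C1 (insert x (a ∪ e)) := by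
      intro x hx hgd hacc
      have : insert x (a ∪ e) ∈ oneStepExt (a ∪ e) D ∩ {f | EAcc X C1 f} :=
        ⟨⟨x, hx, hgd, rfl⟩, hacc⟩
      rw [hom] at this
      exact this
    set D2 : Set ℕ := ↑r ∪ {x | x ∈ D ∧ EGd r x ∧ EGd a x} with hD2def
    have hD2H : D2 ∈ H := by
      have htail := tail_mem_H hCo hDH (r ∪ a)
      refine hCo.2.1 _ htail _ ((hCo.1 _ htail).mono ?_) ?_ <;>
      · intro x hx
        have := egd_union.mp hx.2
        exact Or.inr ⟨hx.1, this.1, this.2⟩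
    have hD2mem : ∀ x ∈ D2, EGd (a ∪ e) x → x ∈ D := by
      intro x hx hgd
      rcases hx with hx | hx
      · exact absurd hgd (key_r_fact hC1'Inf Finset.subset_union_right he x hx)
      · exact hx.1
    refine ⟨D2, ⟨hD2H, hCo.1 _ hD2H, ⟨Set.subset_union_left, ?_⟩, ?_⟩, ?_, ?_⟩
    · intro x hx hxr y hy
      rcases hx with hx | hx
      · exact absurd hx (by simpa using hxr)
      · exact hx.2.1 y hy
    · intro x hx
      rcases hx with hx | hx
      · exact ellR_subset hC1'Inf _ hx
      · exact hEsub (hDC1'part x hx.1 hx.2.2)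
    · intro x hx
      rcases hx with hx | hx
      · exact hEinit.1 hx
      · exact hDC1'part x hx.1 hx.2.2
    · intro x hx hgd
      exact hnA x (hD2mem x hx hgd) hgd

end MainLemmas

/-- Metric open subsets of `ℕ^[∞]` are `H`-Ramsey for a semiselective coideal `H`.
`X` being open in the metric (subspace) topology on `ℕ^[∞]` is expressed by:
every `A ∈ X` has an initial segment `b` with `[b] ∩ ℕ^[∞] ⊆ X`. -/
theorem metric_open_HRamsey (H : Set (Set ℕ)) (hH : Semiselective H)
    (X : Set (Set ℕ)) (hX : ∀ A ∈ X, A.Infinite)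
    (hopen : ∀ A ∈ X, ∃ b : Finset ℕ, IsInitSeg b A ∧
      ∀ C : Set ℕ, C.Infinite → IsInitSeg b C → C ∈ X) :
    HRamsey H X := by
  obtain ⟨hCo, hSel⟩ := hH
  have hInf := hCo.1
  intro a A hA hne
  obtain ⟨W, hWinf, hWinit, hWsub⟩ := hne
  have haA : ↑a ⊆ A := hWinit.1.trans hWsub
  obtain ⟨B1', hB1'H, hB1'A, hv⟩ := decide_lemma (X := X) hA a
  have hB1H : mset a B1' ∈ H := mset_mem_H hCo hB1'H a
  have hB1A : mset a B1' ⊆ A := mset_subset haA hB1'A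
  rcases hv with hacc | hrej
  · refine ⟨mset a B1', ⟨⟨hInf _ hB1H, mset_initSeg a B1', hB1A⟩, hB1H⟩, Or.inl ?_⟩
    intro C hC
    obtain ⟨hCi, hCinit, hCs⟩ := hC
    apply hacc C hCi hCinit
    intro x hx
    exact mem_of_mem_mset (hCs hx.1)
      (fun y hy => hCinit.2 x hx.1 (fun h => hx.2 (Finset.mem_coe.mpr h)) y hy)
  · set B1 := mset a B1' with hB1def
    have hB1init : IsInitSeg a B1 := mset_initSeg a B1'
    have hRejB1 : ERej H X B1 a := by
      intro D hD hDs hacc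
      refine hrej {x | x ∈ D ∧ EGd a x} (tail_mem_H hCo hD a) ?_
        (eacc_anti (fun x hx => hx.1) hacc)
      intro x hx
      exact mem_of_mem_mset (hDs hx.1) hx.2
    -- fusion 1
    have hDfamDO : ∀ e : Finset ℕ, ↑e ⊆ B1 →
        DenseOpenIn {D | D ∈ H ∩ ENbhdN (depth B1 e) B1 ∧
            (EAcc X D (a ∪ e) ∨ ERej H X D (a ∪ e))}
          (H ∩ ENbhdN (depth B1 e) B1) := by
      intro e he
      constructor
      · intro E hE
        obtain ⟨D, hD1, hD2, hD3⟩ :=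
          patch_lemma (X := X) hCo hB1H (c := a ∪ e) Finset.subset_union_right he hE
        exact ⟨D, ⟨hD1, hD3⟩, hD2⟩
      · intro E hE D hD hED
        exact ⟨hE, hD.2.elim (fun h => Or.inl (eacc_anti hED h))
          (fun h => Or.inr (erej_anti hED h))⟩
    obtain ⟨C1', hC1'H, hC1'B1, Afam, hAfam, hdiag⟩ :=
      hSel B1 hB1H (fun e => {D | D ∈ H ∩ ENbhdN (depth B1 e) B1 ∧
        (EAcc X D (a ∪ e) ∨ ERej H X D (a ∪ e))}) hDfamDO B1 hB1H Set.Subset.rfl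
    set C1 := mset a C1' with hC1def
    have hC1H : C1 ∈ H := mset_mem_H hCo hC1'H a
    have hC1B1 : C1 ⊆ B1 := by
      have h1 := mset_mono (a := a) hC1'B1
      rwa [mset_eq_of_initSeg hB1init] at h1
    have hC1in : ∀ x ∈ C1', EGd a x → x ∈ C1 := fun x hx hgd => Or.inr ⟨hx, hgd⟩
    have hsubAf : ∀ e : Finset ℕ, ↑e ⊆ C1' → ∀ x ∈ C1, EGd (a ∪ e) x → x ∈ Afam e := by
      intro e he x hx hgd
      have h2 := egd_union.mp hgd
      have hxC1' : x ∈ C1' := mem_of_mem_mset hx h2.1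
      exact diag_extract hdiag (hInf C1' hC1'H) he x hxC1' h2.2
    have dagger : ∀ e : Finset ℕ, ↑e ⊆ C1' →
        (EAcc X C1 (a ∪ e) ∨ ERej H X C1 (a ∪ e)) := by
      intro e he
      have hAf := hAfam e (he.trans hC1'B1)
      rcases hAf.2 with hacc | hrej2
      · left
        intro C hCi hCinit hCs
        apply hacc C hCi hCinit
        intro x hx
        exact hsubAf e he x (hCs hx)
          (fun y hy => hCinit.2 x hx.1 (fun h => hx.2 (Finset.mem_coe.mpr h)) y hy)
      · right
        intro D hD hDC1 hacc2
        refine hrej2 {x | x ∈ D ∧ EGd (a ∪ e) x} (tail_mem_H hCo hD _) ?_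
          (eacc_anti (fun x hx => hx.1) hacc2)
        intro x hx
        exact hsubAf e he x (hDC1 hx.1) hx.2
    -- fusion 2
    have hDfam'DO : ∀ e : Finset ℕ, ↑e ⊆ C1' →
        DenseOpenIn {D | D ∈ H ∩ ENbhdN (depth C1' e) C1' ∧
            (((∀ z ∈ e, EGd a z) ∧ ERej H X C1 (a ∪ e)) →
              ∀ x ∈ D, EGd (a ∪ e) x → ¬ EAcc X C1 (insert x (a ∪ e)))}
          (H ∩ ENbhdN (depth C1' e) C1') := by
      intro e he
      constructor
      · intro E hE
        by_cases hc : (∀ z ∈ e, EGd a z) ∧ ERej H X C1 (a ∪ e)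
        · obtain ⟨D, hD1, hD2, hD3⟩ := fusion2_dense hCo hC1'H a hC1in he hc.1 hc.2 hE
          exact ⟨D, ⟨hD1, fun _ => hD3⟩, hD2⟩
        · exact ⟨E, ⟨hE, fun h => absurd h hc⟩, Set.Subset.rfl⟩
      · intro E hE D hD hED
        exact ⟨hE, fun hc x hx hgd => hD.2 hc x (hED hx) hgd⟩
    obtain ⟨C2', hC2'H, hC2'C1', Afam', hAfam', hdiag'⟩ :=
      hSel C1' hC1'H (fun e => {D | D ∈ H ∩ ENbhdN (depth C1' e) C1' ∧
        (((∀ z ∈ e, EGd a z) ∧ ERej H X C1 (a ∪ e)) →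
          ∀ x ∈ D, EGd (a ∪ e) x → ¬ EAcc X C1 (insert x (a ∪ e)))})
        hDfam'DO C1' hC1'H Set.Subset.rfl
    have ddagger : ∀ e : Finset ℕ, ↑e ⊆ C2' → (∀ z ∈ e, EGd a z) →
        ERej H X C1 (a ∪ e) →
        ∀ x ∈ C2', EGd (a ∪ e) x → ¬ EAcc X C1 (insert x (a ∪ e)) := by
      intro e he hea hrej2 x hx hgd
      have heC1' : ↑e ⊆ C1' := he.trans hC2'C1'
      have hxA : x ∈ Afam' e :=
        diag_extract hdiag' (hInf C2' hC2'H) he x hx (egd_union.mp hgd).2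
      exact (hAfam' e heC1').2 ⟨hea, hrej2⟩ x hxA hgd
    have hRejC1a : ERej H X C1 a := erej_anti hC1B1 hRejB1
    have key : ∀ n : ℕ, ∀ e : Finset ℕ, e.card = n → ↑e ⊆ C2' →
        (∀ z ∈ e, EGd a z) → ERej H X C1 (a ∪ e) := by
      intro n
      induction n with
      | zero =>
        intro e hcard _ _
        rw [Finset.card_eq_zero.mp hcard, Finset.union_empty]
        exact hRejC1a
      | succ n ih =>
        intro e hcard he hea
        have hne : e.Nonempty := Finset.card_pos.mp (by omega)
        have hxe : e.max' hne ∈ e := e.max'_mem hne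
        set x := e.max' hne with hxdef
        set e' := e.erase x with he'def
        have hcard' : e'.card = n := by
          rw [he'def, Finset.card_erase_of_mem hxe, hcard]
          omega
        have hsub' : e' ⊆ e := Finset.erase_subset _ _
        have he' : ↑e' ⊆ C2' :=
          fun z hz => he (Finset.mem_coe.mpr (hsub' (Finset.mem_coe.mp hz)))
        have hrej' := ih e' hcard' he' (fun z hz => hea z (hsub' hz))
        have hgd : EGd (a ∪ e') x := by
          rw [egd_union]
          refine ⟨hea x hxe, ?_⟩
          intro z hz
          have hzx := Finset.mem_erase.mp hz
          exact lt_of_le_of_ne (e.le_max' z hzx.2) hzx.1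
        have hnacc := ddagger e' he' (fun z hz => hea z (hsub' hz)) hrej' x
          (he (Finset.mem_coe.mpr hxe)) hgd
        have hins : insert x (a ∪ e') = a ∪ e := by
          rw [← Finset.union_insert, Finset.insert_erase hxe]
        rw [hins] at hnacc
        rcases dagger e (he.trans hC2'C1') with hacc | hrej2
        · exact absurd hacc hnacc
        · exact hrej2
    -- conclusion
    have hBH : mset a C2' ∈ H := mset_mem_H hCo hC2'H a
    have hBA : mset a C2' ⊆ A := mset_subset haA ((hC2'C1'.trans hC1'B1).trans hB1A)
    refine ⟨mset a C2', ⟨⟨hInf _ hBH, mset_initSeg a C2', hBA⟩, hBH⟩, Or.inr ?_⟩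
    rw [Set.eq_empty_iff_forall_notMem]
    intro C hC
    obtain ⟨⟨hCi, hCinit, hCs⟩, hCX⟩ := hC
    obtain ⟨b, hbinit, hbF⟩ := hopen C hCX
    have hprops : ∀ z ∈ b \ a, z ∈ C2' ∧ EGd a z := by
      intro z hz
      have hzmem := Finset.mem_sdiff.mp hz
      have hzC : z ∈ C := hbinit.1 (Finset.mem_coe.mpr hzmem.1)
      have hgd : EGd a z := fun y hy => hCinit.2 z hzC hzmem.2 y hy
      exact ⟨mem_of_mem_mset (hCs hzC) hgd, hgd⟩
    have hrej2 := key (b \ a).card (b \ a) rfl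
      (fun z hz => (hprops z (Finset.mem_coe.mp hz)).1) (fun z hz => (hprops z hz).2)
    rw [Finset.union_sdiff_self_eq_union] at hrej2
    refine hrej2 C1 hC1H Set.Subset.rfl ?_
    intro C' hC'i hC'init _
    apply hbF C' hC'i
    constructor
    · intro y hy
      exact hC'init.1 (Finset.mem_coe.mpr (Finset.mem_union_right a (Finset.mem_coe.mp hy)))
    · intro x hxC' hxb y hy
      by_cases hxa : x ∈ a
      · exact hbinit.2 x (hCinit.1 (Finset.mem_coe.mpr hxa)) hxb y hy
      · have hxab : x ∉ a ∪ b := fun h => (Finset.mem_union.mp h).elim hxa hxb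
        exact hC'init.2 x hxC' hxab y (Finset.mem_union_right a hy)
end

section
/- Every semiselective coideal is Ramsey: Let H ⊆ ℕ^[∞] be a semiselective coideal. Then for every integer n ≥ 2, every map f from the n-element subsets of ℕ to {0,1}, and every A ∈ H, there exists B ∈ H with B ⊆ A such that f is constant on the n-element subsets of B. -/
open Set

/-!
Induction on `n`. By property (iii) of a coideal, for each finite `a` the sets `B` whose
one-step extensions of `a` lie all inside or all outside a given `O` are dense open below `A`;
semiselectivity diagonalizes these dense sets into a single `C ∈ H`. On such a `C` the colour of
`a ∪ {x}`, with `x ∈ C` above `a`, depends on `a` alone, so splitting an `(n+1)`-set into its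
maximum and the rest reduces the colouring of `(n+1)`-sets to one of `n`-sets.
-/

def IsHomogeneous (O S : Set (Finset ℕ)) : Prop :=
  S ⊆ O ∨ S ∩ O = ∅

lemma IsHomogeneous.anti {O S T : Set (Finset ℕ)} (hT : IsHomogeneous O T) (hST : S ⊆ T) :
    IsHomogeneous O S :=
  hT.imp hST.trans fun h : T ∩ O = ∅ =>
    subset_empty_iff.mp (h ▸ inter_subset_inter_left O hST)

lemma oneStepExt_mono {a : Finset ℕ} {B C : Set ℕ} (h : B ⊆ C) :
    oneStepExt a B ⊆ oneStepExt a C := by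
  rintro b ⟨x, hx, hxa, rfl⟩
  exact ⟨x, h hx, hxa, rfl⟩

lemma mem_oneStepExt_erase_max' {s : Finset ℕ} {C : Set ℕ} (hs : s.Nonempty)
    (hsC : ↑s ⊆ C) :
    s ∈ oneStepExt (s.erase (s.max' hs)) C :=
  ⟨s.max' hs, hsC (s.max'_mem hs), fun _ hy => s.lt_max'_of_mem_erase_max' hs hy,
    (Finset.insert_erase (s.max'_mem hs)).symm⟩

lemma exists_subset_ellR {A : Set ℕ} {a : Finset ℕ} (ha : ↑a ⊆ A) :
    ∃ n, a ⊆ ellR n A := by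
  classical
  refine ⟨(a.sup (Nat.count (· ∈ A))) + 1, fun x hx => ?_⟩
  simp only [ellR, Finset.mem_image, Finset.mem_range]
  exact ⟨Nat.count (· ∈ A) x, Nat.lt_succ_of_le (Finset.le_sup hx), Nat.nth_count (ha hx)⟩

lemma subset_of_mem_ENbhdN_depth {A B : Set ℕ} {a : Finset ℕ} (ha : ↑a ⊆ A)
    (hB : B ∈ ENbhdN (depth A a) A) : ↑a ⊆ B :=
  fun _ hx => hB.2.1.1 (Nat.sInf_mem (exists_subset_ellR ha) hx)

lemma IsCoideal.denseOpenIn_isHomogeneous_oneStepExt {H : Set (Set ℕ)} (hH : IsCoideal H)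
    {A : Set ℕ} {a : Finset ℕ} (ha : ↑a ⊆ A) (O : Set (Finset ℕ)) :
    DenseOpenIn {B | IsHomogeneous O (oneStepExt a B)} (H ∩ ENbhdN (depth A a) A) := by
  refine ⟨fun B ⟨hBH, hB⟩ => ?_, fun B _ C hC hBC => hC.anti (oneStepExt_mono hBC)⟩
  obtain ⟨C, ⟨_, _, _, hCB⟩, hC⟩ :=
    hH.2.2.2 B hBH a (subset_of_mem_ENbhdN_depth ha hB) O
  exact ⟨C, hC, hCB⟩

lemma Diagonalizes.oneStepExt_subset {C : Set ℕ} {Afam : Finset ℕ → Set ℕ}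
    (hdiag : Diagonalizes C Afam) (hC : C.Infinite) {a : Finset ℕ} (ha : ↑a ⊆ C) :
    oneStepExt a C ⊆ oneStepExt a (Afam a) := by
  rintro b ⟨x, hxC, hxa, rfl⟩
  -- `x` is the least new element of `↑a ∪ (C \ Iio x) ∈ [a, C] ⊆ [a, Afam a]`
  have hmem : ↑a ∪ (C \ Iio x) ∈ ENbhd a C := by
    refine ⟨(hC.sdiff (finite_Iio x)).mono subset_union_right, ⟨subset_union_left, ?_⟩,
      union_subset ha sdiff_subset⟩
    rintro z (hz | ⟨_, hzx⟩) hza y hy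
    · exact absurd hz hza
    · exact (hxa y hy).trans_le (not_lt.mp hzx)
  exact ⟨x, (hdiag a ha hmem).2.2 (Or.inr ⟨hxC, lt_irrefl x⟩), hxa, rfl⟩

namespace Semiselective

variable {H : Set (Set ℕ)}

lemma exists_isHomogeneous_oneStepExt (hH : Semiselective H) {A : Set ℕ} (hA : A ∈ H)
    (O : Set (Finset ℕ)) :
    ∃ C ∈ H, C ⊆ A ∧ ∀ a : Finset ℕ, ↑a ⊆ C → IsHomogeneous O (oneStepExt a C) := by
  obtain ⟨C, hCH, hCA, Afam, hAfam, hdiag⟩ :=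
    hH.2 A hA (fun a => {B | IsHomogeneous O (oneStepExt a B)})
      (fun _ ha => hH.1.denseOpenIn_isHomogeneous_oneStepExt ha O) A hA subset_rfl
  exact ⟨C, hCH, hCA, fun a ha =>
    (hAfam a (ha.trans hCA)).anti (hdiag.oneStepExt_subset (hH.1.1 C hCH) ha)⟩

lemma exists_color_oneStepExt_eq (hH : Semiselective H) {A : Set ℕ} (hA : A ∈ H)
    (g : Finset ℕ → Fin 2) :
    ∃ C ∈ H, C ⊆ A ∧ ∃ g' : Finset ℕ → Fin 2,
      ∀ a : Finset ℕ, ↑a ⊆ C → ∀ b ∈ oneStepExt a C, g b = g' a := by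
  obtain ⟨C, hCH, hCA, hC⟩ := hH.exists_isHomogeneous_oneStepExt hA {b | g b = 0}
  have : ∀ a : Finset ℕ, ∃ i, ↑a ⊆ C → ∀ b ∈ oneStepExt a C, g b = i := by
    intro a
    by_cases ha : ↑a ⊆ C
    · rcases hC a ha with h | h
      · exact ⟨0, fun _ b hb => h hb⟩
      · exact ⟨1, fun _ b hb => Fin.eq_one_of_ne_zero _ fun hb0 =>
          (eq_empty_iff_forall_notMem.mp h) b ⟨hb, hb0⟩⟩
    · exact ⟨0, fun h => absurd h ha⟩
  choose g' hg' using this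
  exact ⟨C, hCH, hCA, g', fun a => hg' a⟩

lemma exists_homogeneous (hH : Semiselective H) (m : ℕ) :
    ∀ (g : Finset ℕ → Fin 2) {A : Set ℕ}, A ∈ H →
      ∃ B ∈ H, B ⊆ A ∧ ∃ i : Fin 2, ∀ s : Finset ℕ, s.card = m → ↑s ⊆ B → g s = i := by
  induction m with
  | zero =>
    exact fun g A hA =>
      ⟨A, hA, subset_rfl, g ∅, fun s hs _ => by rw [Finset.card_eq_zero.mp hs]⟩
  | succ m ih =>
    intro g A hA
    obtain ⟨C, hCH, hCA, g', hg'⟩ := hH.exists_color_oneStepExt_eq hA g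
    obtain ⟨B, hBH, hBC, i, hi⟩ := ih g' hCH
    refine ⟨B, hBH, hBC.trans hCA, i, fun s hs hsB => ?_⟩
    have hne : s.Nonempty := Finset.card_pos.mp (by omega)
    have hsub : ↑(s.erase (s.max' hne)) ⊆ B :=
      (Finset.coe_subset.mpr (s.erase_subset _)).trans hsB
    rw [hg' _ (hsub.trans hBC) s (mem_oneStepExt_erase_max' hne (hsB.trans hBC))]
    exact hi _ (by rw [Finset.card_erase_of_mem (s.max'_mem hne), hs, Nat.add_sub_cancel])
      hsub

end Semiselective

theorem semiselective_is_ramsey_general (H : Set (Set ℕ)) (hH : Semiselective H)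
    (n : ℕ) (f : Finset ℕ → Fin 2) (A : Set ℕ) (hA : A ∈ H) :
    ∃ B ∈ H, B ⊆ A ∧ ∃ i : Fin 2,
      ∀ s : Finset ℕ, s.card = n → ↑s ⊆ B → f s = i :=
  hH.exists_homogeneous n f hA

/-- Every semiselective coideal is Ramsey: homogeneity for `n`-element subsets. -/
theorem semiselective_is_ramsey (H : Set (Set ℕ)) (hH : Semiselective H)
    (n : ℕ) (hn : 2 ≤ n) (f : Finset ℕ → Fin 2) (A : Set ℕ) (hA : A ∈ H) :
    ∃ B ∈ H, B ⊆ A ∧ ∃ i : Fin 2,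
      ∀ s : Finset ℕ, s.card = n → ↑s ⊆ B → f s = i :=
  semiselective_is_ramsey_general H hH n f A hA
end
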